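/- Let n ≥ 1 and let d be an integer with 1 ≤ d ≤ 2n−2. Then there exists a finite set S of arcs of M̄_n which is connected, has complete orbit, and has homological length exactly d. (Equivalently: the Paquette–Yıldırım category C̄_n possesses a classical generator of homological length d.) -/

import Mathlib

/-! Combinatorial model of the Paquette–Yıldırım completed cluster category `C̄ₙ`.

The set of marked points `M̄ₙ` consists of the marked points `(k, i)` (the `k`-th marked
point of the `i`-th segment, for `i : Fin n`) together with the accumulation points
(indexed by `Fin n`; `Sum.inr i` is the accumulation point `a_{i+1}` of the paper). -/

/-- The marked points of `M̄ₙ`: `Sum.inl (k, i)` is a marked point of a segment,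
`Sum.inr i` is an accumulation point. -/
abbrev MbarPt (n : ℕ) := (ℤ × Fin n) ⊕ Fin n

/-- The injection of `M̄ₙ` into the circle `ℝ/nℤ`, given by representatives in `[0, n)`:
the accumulation point `i` goes to `i`, and the marked point `(k, i)` goes to
`i + 1/2 + k/(2(|k|+1))`. -/
noncomputable def toCircle {n : ℕ} : MbarPt n → ℝ
  | Sum.inl (k, i) => (i : ℝ) + 1 / 2 + (k : ℝ) / (2 * (|(k : ℝ)| + 1))
  | Sum.inr i => (i : ℝ)

/-- `y` lies strictly between `x` and `z` in the cyclic order on `M̄ₙ` (going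
counterclockwise from `x` to `z`), expressed via the representatives in `[0, n)`. -/
def CycSBtw {n : ℕ} (x y z : MbarPt n) : Prop :=
  (toCircle x < toCircle y ∧ toCircle y < toCircle z) ∨
  (toCircle y < toCircle z ∧ toCircle z < toCircle x) ∨
  (toCircle z < toCircle x ∧ toCircle x < toCircle y)

/-- An arc of `M̄ₙ` is an unordered pair of distinct points of `M̄ₙ` which is not a pair
of consecutive marked points `{(k,i), (k+1,i)}` of a segment. -/
def IsArc {n : ℕ} (p : Sym2 (MbarPt n)) : Prop :=
  ¬ p.IsDiag ∧ ∀ (k : ℤ) (i : Fin n),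
    p ≠ s(Sum.inl (k, i), Sum.inl (k + 1, i))

/-- The `m`-fold clockwise rotation of a point: marked points `(k, i)` move to `(k - m, i)`,
accumulation points are fixed. -/
def rotPt {n : ℕ} (m : ℤ) : MbarPt n → MbarPt n
  | Sum.inl (k, i) => Sum.inl (k - m, i)
  | Sum.inr i => Sum.inr i

/-- The `m`-fold clockwise rotation `ℓ⟦m⟧` of an arc. -/
def rotArc {n : ℕ} (m : ℤ) (p : Sym2 (MbarPt n)) : Sym2 (MbarPt n) :=
  Sym2.map (rotPt m) p

/-- `p` and `q` are rotations of one another. -/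
def SameRot {n : ℕ} (p q : Sym2 (MbarPt n)) : Prop :=
  ∃ m : ℤ, p = rotArc m q

/-- The rotation closure `R(S)` of a set of arcs `S`. -/
def RClos {n : ℕ} (S : Set (Sym2 (MbarPt n))) : Set (Sym2 (MbarPt n)) :=
  {q | ∃ p ∈ S, ∃ m : ℤ, q = rotArc m p}

/-- Two arcs cross if their endpoints alternate in the cyclic order: exactly one
endpoint of one lies strictly between the two endpoints of the other. -/
def Crosses {n : ℕ} (p q : Sym2 (MbarPt n)) : Prop :=
  ∃ x y z w : MbarPt n, p = s(x, y) ∧ q = s(z, w) ∧ CycSBtw x z y ∧ CycSBtw y w x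

/-- Adjacency `ℓ ~ ℓ'` of arcs: they cross, or they are distinct and share an endpoint
which is an accumulation point. -/
def Adj {n : ℕ} (p q : Sym2 (MbarPt n)) : Prop :=
  Crosses p q ∨ (p ≠ q ∧ ∃ i : Fin n, (Sum.inr i : MbarPt n) ∈ p ∧ (Sum.inr i : MbarPt n) ∈ q)

/-- Paths of length `m` in the graph with vertex set `T` and edge relation `Adj`. -/
def AdjChain {n : ℕ} (T : Set (Sym2 (MbarPt n))) : ℕ → Sym2 (MbarPt n) → Sym2 (MbarPt n) → Prop
  | 0, p, q => p = q
  | m + 1, p, q => ∃ r ∈ T, Adj p r ∧ AdjChain T m r q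

/-- `S` is connected: the graph with vertex set `R(S)` and edge relation `~` is connected. -/
def ConnectedArcs {n : ℕ} (S : Set (Sym2 (MbarPt n))) : Prop :=
  ∀ p ∈ RClos S, ∀ q ∈ RClos S, ∃ m : ℕ, AdjChain (RClos S) m p q

/-- `S` has complete orbit: every point of `M̄ₙ` is an endpoint of some arc of `R(S)`. -/
def CompleteOrbit {n : ℕ} (S : Set (Sym2 (MbarPt n))) : Prop :=
  ∀ x : MbarPt n, ∃ p ∈ RClos S, x ∈ p

/-- `S` is minimal: removing any arc of `S` destroys connectedness or completeness of orbit. -/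
def MinimalArcSet {n : ℕ} (S : Set (Sym2 (MbarPt n))) : Prop :=
  ∀ ℓ ∈ S, ¬ (ConnectedArcs (S \ {ℓ}) ∧ CompleteOrbit (S \ {ℓ}))

/-- The homological length of (a connected) `S` is at most `d`: any two vertices of
`R(S)` are joined by a `~`-path of length at most `d`. -/
def HLenLE {n : ℕ} (S : Set (Sym2 (MbarPt n))) (d : ℕ) : Prop :=
  ∀ p ∈ RClos S, ∀ q ∈ RClos S, ∃ m ≤ d, AdjChain (RClos S) m p q

/-- The homological length of (a connected) `S` is exactly `d`: every pair of vertices of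
`R(S)` is joined by a path of length `≤ d`, and some pair admits no path of length `< d`. -/
def HLenEq {n : ℕ} (S : Set (Sym2 (MbarPt n))) (d : ℕ) : Prop :=
  HLenLE S d ∧ ∃ p ∈ RClos S, ∃ q ∈ RClos S, ∀ m < d, ¬ AdjChain (RClos S) m p q

/-! For `d ≥ 2`, take a path `pathArc 0, …, pathArc d` of arcs zig-zagging through the first
segments, consecutive arcs alternately crossing and sharing an accumulation point, together with
leaves at the accumulation point `a_2` reaching every point the path misses. Along the path one
can move to any rotation of the next arc (possibly after one detour step), so any two arcs of the
rotation closure are at most `d` steps apart. Conversely the level `t` of `pathArc t` changes by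
at most one along an adjacency, and the leaves sit at level `2`, so the two ends of the path are
exactly `d` steps apart. For `d = 1`, all arcs ending at `a_1` pairwise share that endpoint. -/

open Set Sum

section Circle

variable {n : ℕ}

lemma toCircle_inl_mem_Ioo (k : ℤ) (i : Fin n) :
    toCircle (inl (k, i) : MbarPt n) ∈ Ioo (i : ℝ) (i + 1) := by
  have hpos : (0 : ℝ) < 2 * (|(k : ℝ)| + 1) := by positivity
  have hbound : |(k : ℝ) / (2 * (|(k : ℝ)| + 1))| < 1 / 2 := by
    rw [abs_div, abs_of_pos hpos, div_lt_iff₀ hpos]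
    linarith
  obtain ⟨h₁, h₂⟩ := abs_lt.mp hbound
  constructor <;> simp only [toCircle] <;> linarith

lemma toCircle_inl_strictMono (i : Fin n) :
    StrictMono fun k : ℤ => toCircle (inl (k, i) : MbarPt n) := by
  intro a b hab
  have hab' : (a : ℝ) < b := Int.cast_lt.mpr hab
  have ha : (0 : ℝ) < 2 * (|(a : ℝ)| + 1) := by positivity
  have hb : (0 : ℝ) < 2 * (|(b : ℝ)| + 1) := by positivity
  simp only [toCircle]
  rw [add_lt_add_iff_left, div_lt_div_iff₀ ha hb]
  rcases abs_cases (a : ℝ) with ⟨ha', ha₀⟩ | ⟨ha', ha₀⟩ <;>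
    rcases abs_cases (b : ℝ) with ⟨hb', hb₀⟩ | ⟨hb', hb₀⟩ <;> rw [ha', hb'] <;> nlinarith

lemma toCircle_inr_notMem_Ioo (i : Fin n) (k : ℕ) :
    toCircle (inr i : MbarPt n) ∉ Ioo (k : ℝ) (k + 1) := by
  rintro ⟨h₁, h₂⟩
  simp only [toCircle] at h₁ h₂
  have h₁' : k < (i : ℕ) := by exact_mod_cast h₁
  have h₂' : (i : ℕ) < k + 1 := by exact_mod_cast h₂
  omega

lemma toCircle_inl_notMem_Ioo (x : ℤ) {i : Fin n} {k : ℕ} (hik : (i : ℕ) ≠ k) :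
    toCircle (inl (x, i) : MbarPt n) ∉ Ioo (k : ℝ) (k + 1) := by
  rintro ⟨h₁, h₂⟩
  obtain ⟨h₃, h₄⟩ := toCircle_inl_mem_Ioo x i
  rcases Nat.lt_or_gt_of_ne hik with h | h
  · have : ((i : ℕ) : ℝ) + 1 ≤ k := by exact_mod_cast h
    linarith
  · have : (k : ℝ) + 1 ≤ (i : ℕ) := by exact_mod_cast h
    linarith

end Circle

section Crossing

variable {n : ℕ}

lemma Crosses.symm {p q : Sym2 (MbarPt n)} (h : Crosses p q) : Crosses q p := by
  obtain ⟨x, y, z, w, rfl, rfl, h₁, h₂⟩ := h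
  refine ⟨z, w, y, x, rfl, Sym2.eq_swap, ?_, ?_⟩ <;> unfold CycSBtw at * <;>
    rcases h₁ with h₁ | h₁ | h₁ <;> rcases h₂ with h₂ | h₂ | h₂ <;>
    first
      | exact Or.inl ⟨by linarith, by linarith⟩
      | exact Or.inr (Or.inl ⟨by linarith, by linarith⟩)
      | exact Or.inr (Or.inr ⟨by linarith, by linarith⟩)

lemma crosses_of_lt {a b c e : MbarPt n} (h₁ : toCircle a < toCircle b)
    (h₂ : toCircle b < toCircle c) (h₃ : toCircle c < toCircle e) :
    Crosses s(a, c) s(b, e) :=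
  ⟨a, c, b, e, rfl, rfl, Or.inl ⟨h₁, h₂⟩, Or.inr (Or.inr ⟨h₁.trans h₂, h₃⟩)⟩

lemma not_crosses_of_forall_mem_Icc {p q : Sym2 (MbarPt n)} {u v : ℝ}
    (hp : ∀ a ∈ p, toCircle a ∈ Icc u v) (hq : ∀ b ∈ q, toCircle b ∉ Ioo u v) :
    ¬ Crosses p q := by
  rintro ⟨x, y, z, w, rfl, rfl, hz, hw⟩
  simp only [Sym2.forall_mem_pair, mem_Icc, mem_Ioo, not_and_or, not_lt] at hp hq
  obtain ⟨⟨hx₁, hx₂⟩, hy₁, hy₂⟩ := hp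
  unfold CycSBtw at hz hw
  rcases hq with ⟨hz' | hz', hw' | hw'⟩ <;> rcases hz with hz | hz | hz <;>
    rcases hw with hw | hw | hw <;> linarith [hz.1, hz.2, hw.1, hw.2]

lemma Adj.symm {p q : Sym2 (MbarPt n)} (h : Adj p q) : Adj q p := by
  rcases h with h | ⟨hne, i, hp, hq⟩
  · exact Or.inl h.symm
  · exact Or.inr ⟨hne.symm, i, hq, hp⟩

end Crossing

section Chains

variable {n : ℕ} {T : Set (Sym2 (MbarPt n))}

lemma adjChain_one {p q : Sym2 (MbarPt n)} (hq : q ∈ T) (h : Adj p q) : AdjChain T 1 p q :=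
  ⟨q, hq, h, rfl⟩

lemma AdjChain.trans {m k : ℕ} {p q r : Sym2 (MbarPt n)} (h₁ : AdjChain T m p q)
    (h₂ : AdjChain T k q r) : AdjChain T (m + k) p r := by
  induction m generalizing p with
  | zero => rw [Nat.zero_add]; exact (h₁ : p = q) ▸ h₂
  | succ m ih =>
    obtain ⟨s, hs, hps, hsq⟩ := h₁
    rw [Nat.succ_add]
    exact ⟨s, hs, hps, ih hsq⟩

lemma AdjChain.symm {m : ℕ} {p q : Sym2 (MbarPt n)} (hp : p ∈ T) (h : AdjChain T m p q) :
    AdjChain T m q p := by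
  induction m generalizing p with
  | zero => exact Eq.symm h
  | succ m ih =>
    obtain ⟨r, hr, hpr, hrq⟩ := h
    exact (ih hr hrq).trans (adjChain_one hp hpr.symm)

lemma AdjChain.apply_le_add {f : Sym2 (MbarPt n) → ℕ}
    (hf : ∀ p ∈ T, ∀ q ∈ T, Adj p q → f q ≤ f p + 1) {m : ℕ} {p q : Sym2 (MbarPt n)}
    (hp : p ∈ T) (h : AdjChain T m p q) : f q ≤ f p + m := by
  induction m generalizing p with
  | zero => exact (h : p = q) ▸ Nat.le_add_right _ _
  | succ m ih =>
    obtain ⟨r, hr, hpr, hrq⟩ := h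
    have := hf p hp r hr hpr
    have := ih hr hrq
    omega

end Chains

section RotationClosure

variable {n : ℕ}

lemma rClos_union (A B : Set (Sym2 (MbarPt n))) : RClos (A ∪ B) = RClos A ∪ RClos B := by
  ext q
  simp only [RClos, mem_union, mem_ofPred_eq, or_and_right, exists_or]

lemma mem_rClos_image {ι : Type*} {s : Set ι} {f : ι → Sym2 (MbarPt n)}
    (F : ι → ℤ → Sym2 (MbarPt n)) (hF : ∀ i x m, rotArc m (F i x) = F i (x - m))
    (hf : ∀ i, F i 0 = f i) {q : Sym2 (MbarPt n)} :
    q ∈ RClos (f '' s) ↔ ∃ i ∈ s, ∃ x, q = F i x := by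
  constructor
  · rintro ⟨_, ⟨i, hi, rfl⟩, m, rfl⟩
    exact ⟨i, hi, 0 - m, by rw [← hf, hF]⟩
  · rintro ⟨i, hi, x, rfl⟩
    exact ⟨f i, ⟨i, hi, rfl⟩, -x, by rw [← hf, hF, zero_sub, neg_neg]⟩

end RotationClosure

section HomologicalLength

variable {n : ℕ} {S : Set (Sym2 (MbarPt n))} {d : ℕ}

lemma HLenLE.connectedArcs (h : HLenLE S d) : ConnectedArcs S :=
  fun p hp q hq => (h p hp q hq).imp fun _ hm => hm.2

lemma hLenLE_one_of_forall_inr_mem {i : Fin n} (h : ∀ q ∈ RClos S, inr i ∈ q) : HLenLE S 1 := by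
  intro p hp q hq
  by_cases hpq : p = q
  · exact ⟨0, zero_le_one, hpq⟩
  · exact ⟨1, le_rfl, adjChain_one hq (Or.inr ⟨hpq, i, h p hp, h q hq⟩)⟩

lemma hLenEq_of_apply_le (hS : HLenLE S d) (f : Sym2 (MbarPt n) → ℕ)
    (hf : ∀ p ∈ RClos S, ∀ q ∈ RClos S, Adj p q → f q ≤ f p + 1) {p q : Sym2 (MbarPt n)}
    (hp : p ∈ RClos S) (hq : q ∈ RClos S) (hpq : f p + d ≤ f q) : HLenEq S d :=
  ⟨hS, p, hp, q, hq, fun m hm h => by have := h.apply_le_add hf hp; omega⟩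

end HomologicalLength

namespace MbarPt

section

variable {n : ℕ} [NeZero n]

/-- The segment index `i` is read modulo `n`. -/
def pt (x : ℤ) (i : ℕ) : MbarPt n := inl (x, Fin.ofNat n i)

/-- The accumulation point `a_{j+1}`, with `j` read modulo `n`. -/
def acc (j : ℕ) : MbarPt n := inr (Fin.ofNat n j)

lemma ofNat_inj {a b : ℕ} (ha : a < n) (hb : b < n) : Fin.ofNat n a = Fin.ofNat n b ↔ a = b := by
  simp [Fin.ext_iff, Nat.mod_eq_of_lt ha, Nat.mod_eq_of_lt hb]

lemma pt_val (x : ℤ) (i : Fin n) : pt x i = inl (x, i) := by simp [pt]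

lemma acc_val (j : Fin n) : acc j = (inr j : MbarPt n) := by simp [acc]

lemma toCircle_pt_mem_Ioo (x : ℤ) {i : ℕ} (hi : i < n) :
    toCircle (pt x i : MbarPt n) ∈ Ioo (i : ℝ) (i + 1) := by
  simpa [pt, Nat.mod_eq_of_lt hi] using toCircle_inl_mem_Ioo x (Fin.ofNat n i)

lemma toCircle_acc {j : ℕ} (hj : j < n) : toCircle (acc j : MbarPt n) = j := by
  simp [acc, toCircle, Nat.mod_eq_of_lt hj]

lemma rotArc_pt_acc (m x : ℤ) (i j : ℕ) :
    rotArc m s(pt x i, acc j) = (s(pt (x - m) i, acc j) : Sym2 (MbarPt n)) := rfl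

lemma rotArc_acc_acc (m : ℤ) (i j : ℕ) :
    rotArc m s(acc i, acc j) = (s(acc i, acc j) : Sym2 (MbarPt n)) := rfl

lemma inr_mem_pt_acc {a : Fin n} {x : ℤ} {i j : ℕ} :
    inr a ∈ (s(pt x i, acc j) : Sym2 (MbarPt n)) ↔ a = Fin.ofNat n j := by
  simp [pt, acc]

lemma inr_mem_acc_acc {a : Fin n} {i j : ℕ} :
    inr a ∈ (s(acc i, acc j) : Sym2 (MbarPt n)) ↔ a = Fin.ofNat n i ∨ a = Fin.ofNat n j := by
  simp [acc]

lemma eq_of_pt_acc_eq {x x' : ℤ} {i i' j j' : ℕ} (hi : i < n) (hi' : i' < n)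
    (h : (s(pt x i, acc j) : Sym2 (MbarPt n)) = s(pt x' i', acc j')) : x = x' ∧ i = i' := by
  rcases Sym2.eq_iff.mp h with ⟨h₁, -⟩ | ⟨h₁, -⟩
  · simp only [pt, inl.injEq, Prod.mk.injEq] at h₁
    exact ⟨h₁.1, (ofNat_inj hi hi').mp h₁.2⟩
  · simp [pt, acc] at h₁

lemma pt_acc_ne_acc_acc (x : ℤ) (i j a b : ℕ) :
    (s(pt x i, acc j) : Sym2 (MbarPt n)) ≠ s(acc a, acc b) := by
  intro h
  rcases Sym2.eq_iff.mp h with ⟨h₁, -⟩ | ⟨h₁, -⟩ <;> simp [pt, acc] at h₁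

lemma adj_of_acc_mem {p q : Sym2 (MbarPt n)} {j : ℕ} (hpq : p ≠ q) (hp : acc j ∈ p)
    (hq : acc j ∈ q) : Adj p q :=
  Or.inr ⟨hpq, _, hp, hq⟩

lemma forall_mem_acc_acc_notMem_Ioo (i j k : ℕ) :
    ∀ b ∈ (s(acc i, acc j) : Sym2 (MbarPt n)), toCircle b ∉ Ioo (k : ℝ) (k + 1) := by
  simp only [Sym2.forall_mem_pair, acc]
  exact ⟨toCircle_inr_notMem_Ioo _ k, toCircle_inr_notMem_Ioo _ k⟩

lemma forall_mem_pt_acc_notMem_Ioo (x : ℤ) {i : ℕ} (j : ℕ) {k : ℕ} (hi : i < n) (hik : i ≠ k) :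
    ∀ b ∈ (s(pt x i, acc j) : Sym2 (MbarPt n)), toCircle b ∉ Ioo (k : ℝ) (k + 1) := by
  simp only [Sym2.forall_mem_pair]
  refine ⟨toCircle_inl_notMem_Ioo x ?_, toCircle_inr_notMem_Ioo _ k⟩
  simpa [Nat.mod_eq_of_lt hi] using hik

lemma isArc_pt_acc (x : ℤ) (i j : ℕ) : IsArc (s(pt x i, acc j) : Sym2 (MbarPt n)) := by
  refine ⟨by simp [pt, acc], fun k i' h => ?_⟩
  rcases Sym2.eq_iff.mp h with ⟨-, h₂⟩ | ⟨-, h₂⟩ <;> simp [acc] at h₂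

lemma isArc_acc_acc {i j : ℕ} (hi : i < n) (hj : j < n) (hij : i ≠ j) :
    IsArc (s(acc i, acc j) : Sym2 (MbarPt n)) := by
  refine ⟨by simpa [acc] using (ofNat_inj hi hj).not.mpr hij, fun k i' h => ?_⟩
  rcases Sym2.eq_iff.mp h with ⟨h₁, -⟩ | ⟨h₁, -⟩ <;> simp [acc] at h₁

def pathArc (t : ℕ) (x : ℤ) : Sym2 (MbarPt n) := s(pt x (t / 2), acc ((t + 1) / 2))

lemma rotArc_pathArc (m : ℤ) (t : ℕ) (x : ℤ) :
    rotArc m (pathArc t x) = (pathArc t (x - m) : Sym2 (MbarPt n)) := rfl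

lemma pathArc_injective {t : ℕ} (ht : t + 2 ≤ 2 * n) :
    Function.Injective (pathArc t : ℤ → Sym2 (MbarPt n)) :=
  fun _ _ h => (eq_of_pt_acc_eq (by omega) (by omega) h).1

lemma not_crosses_pathArc {t : ℕ} (ht : t + 2 ≤ 2 * n) (x : ℤ) {q : Sym2 (MbarPt n)}
    (hq : ∀ b ∈ q, toCircle b ∉ Ioo ((t / 2 : ℕ) : ℝ) ((t / 2 : ℕ) + 1)) :
    ¬ Crosses (pathArc t x) q := by
  refine not_crosses_of_forall_mem_Icc ?_ hq
  have hlo : t / 2 ≤ (t + 1) / 2 := by omega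
  have hhi : (t + 1) / 2 ≤ t / 2 + 1 := by omega
  simp only [pathArc, Sym2.forall_mem_pair, toCircle_acc (by omega : (t + 1) / 2 < n)]
  exact ⟨Ioo_subset_Icc_self (toCircle_pt_mem_Ioo x (by omega)),
    by exact_mod_cast hlo, by exact_mod_cast hhi⟩

lemma adj_pathArc_of_ne {t : ℕ} (ht : t + 2 ≤ 2 * n) {x x' : ℤ} (hxx : x ≠ x') :
    Adj (pathArc t x : Sym2 (MbarPt n)) (pathArc t x') :=
  adj_of_acc_mem (fun h => hxx (pathArc_injective ht h)) (Sym2.mem_mk_right _ _)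
    (Sym2.mem_mk_right _ _)

lemma adj_pathArc_succ_of_odd {t : ℕ} (ht : t + 3 ≤ 2 * n) (hodd : Odd t) (x y : ℤ) :
    Adj (pathArc t x : Sym2 (MbarPt n)) (pathArc (t + 1) y) := by
  obtain ⟨k, rfl⟩ := hodd
  refine adj_of_acc_mem (j := k + 1) (fun h => ?_) ?_ ?_
  · have := (eq_of_pt_acc_eq (by omega) (by omega) h).2
    omega
  · simp [pathArc, show (2 * k + 1 + 1) / 2 = k + 1 by omega]
  · simp [pathArc, show (2 * k + 1 + 1 + 1) / 2 = k + 1 by omega]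

lemma adj_pathArc_succ {t : ℕ} (ht : t + 3 ≤ 2 * n) {x y : ℤ} (hyx : y < x) :
    Adj (pathArc t x : Sym2 (MbarPt n)) (pathArc (t + 1) y) := by
  rcases Nat.even_or_odd t with ⟨k, rfl⟩ | hodd
  · have hk : k + 1 < n := by omega
    left
    simp only [pathArc, show (k + k) / 2 = k by omega, show (k + k + 1) / 2 = k by omega,
      show (k + k + 1 + 1) / 2 = k + 1 by omega]
    rw [Sym2.eq_swap]
    obtain ⟨hy, -⟩ := toCircle_pt_mem_Ioo (n := n) y (by omega : k < n)
    obtain ⟨-, hx⟩ := toCircle_pt_mem_Ioo (n := n) x (by omega : k < n)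
    refine crosses_of_lt ?_ ?_ ?_
    · rwa [toCircle_acc (by omega)]
    · simpa [pt] using toCircle_inl_strictMono _ hyx
    · rw [toCircle_acc hk]
      push_cast
      exact hx
  · exact adj_pathArc_succ_of_odd ht hodd x y

lemma not_adj_pathArc {t t' : ℕ} (ht' : t' + 2 ≤ 2 * n) (htt : t + 2 ≤ t') (x x' : ℤ) :
    ¬ Adj (pathArc t x : Sym2 (MbarPt n)) (pathArc t' x') := by
  rintro (hc | ⟨-, a, hp, hq⟩)
  · exact not_crosses_pathArc (by omega) x
      (forall_mem_pt_acc_notMem_Ioo x' _ (by omega) (by omega)) hc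
  · rw [pathArc, inr_mem_pt_acc] at hp hq
    have := (ofNat_inj (by omega) (by omega)).mp (hp.symm.trans hq)
    omega

end

section

variable {n : ℕ}

/-- `pathArc t x` gets level `⌊t/2⌋ + ⌈t/2⌉ = t`; every other arc, in particular every leaf, gets
`2`, which fits since the leaves are adjacent only to `pathArc 1` and `pathArc 2`. -/
def pairLevel : MbarPt n → MbarPt n → ℕ
  | inl (_, i), inr j | inr j, inl (_, i) =>
      if (j : ℕ) = i ∨ (j : ℕ) = i + 1 then i + j else 2
  | _, _ => 2

lemma pairLevel_comm (a b : MbarPt n) : pairLevel a b = pairLevel b a := by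
  rcases a with ⟨_, _⟩ | _ <;> rcases b with ⟨_, _⟩ | _ <;> rfl

def arcLevel : Sym2 (MbarPt n) → ℕ := Sym2.lift ⟨pairLevel, pairLevel_comm⟩

end

variable {n : ℕ} [NeZero n]

lemma arcLevel_pathArc {t : ℕ} (ht : t + 2 ≤ 2 * n) (x : ℤ) :
    arcLevel (pathArc t x : Sym2 (MbarPt n)) = t := by
  simp only [arcLevel, pathArc, pt, acc, Sym2.lift_mk, pairLevel, Fin.val_ofNat,
    Nat.mod_eq_of_lt (by omega : t / 2 < n), Nat.mod_eq_of_lt (by omega : (t + 1) / 2 < n)]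
  rw [if_pos (by omega)]
  omega

lemma arcLevel_acc_acc (i j : ℕ) : arcLevel (s(acc i, acc j) : Sym2 (MbarPt n)) = 2 := rfl

lemma arcLevel_pt_acc_one (x : ℤ) {i : ℕ} (hi : 2 ≤ i) (hin : i < n) :
    arcLevel (s(pt x i, acc 1) : Sym2 (MbarPt n)) = 2 := by
  simp only [arcLevel, pt, acc, Sym2.lift_mk, pairLevel, Fin.val_ofNat,
    Nat.mod_eq_of_lt hin, Nat.mod_eq_of_lt (by omega : 1 < n)]
  rw [if_neg (by omega)]

section PathChains

variable {T : Set (Sym2 (MbarPt n))} {d : ℕ}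

lemma adjChain_pathArc_add (hd : d + 2 ≤ 2 * n) (hT : ∀ t ≤ d, ∀ x, pathArc t x ∈ T) :
    ∀ (k t : ℕ) (x y : ℤ), t + k ≤ d → x = y + k →
      AdjChain T k (pathArc t x) (pathArc (t + k) y)
  | 0, t, x, y, _, hxy => by rw [hxy, Nat.cast_zero, add_zero, add_zero]; rfl
  | k + 1, t, x, y, htk, hxy => by
    refine ⟨pathArc (t + 1) (y + k), hT _ (by omega) _, adj_pathArc_succ (by omega) (by omega), ?_⟩
    rw [show t + (k + 1) = t + 1 + k by omega]
    exact adjChain_pathArc_add hd hT k (t + 1) (y + k) y (by omega) rfl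

/-- The odd step `s → s + 1` is where the chain may jump to an arbitrary rotation. -/
lemma adjChain_pathArc_of_odd (hd : d + 2 ≤ 2 * n) (hT : ∀ t ≤ d, ∀ x, pathArc t x ∈ T)
    {s t t' : ℕ} (hs : Odd s) (hts : t ≤ s) (hst : s < t') (ht' : t' ≤ d) (x x' : ℤ) :
    AdjChain T (t' - t) (pathArc t x) (pathArc t' x') := by
  obtain ⟨a, rfl⟩ := Nat.exists_eq_add_of_le hts
  obtain ⟨b, rfl⟩ := Nat.exists_eq_add_of_lt hst
  have h₁ := adjChain_pathArc_add hd hT a t x (x - a) (by omega) (by ring)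
  have h₂ : AdjChain T 1 (pathArc (t + a) (x - a)) (pathArc (t + a + 1) (x' + b)) :=
    adjChain_one (hT _ (by omega) _) (adj_pathArc_succ_of_odd (by omega) hs _ _)
  have h₃ := adjChain_pathArc_add hd hT b (t + a + 1) (x' + b) x' (by omega) rfl
  rw [show t + a + b + 1 - t = a + 1 + b by omega, show t + a + b + 1 = t + a + 1 + b by omega]
  exact (h₁.trans h₂).trans h₃

lemma exists_adjChain_pathArc (hd₂ : 2 ≤ d) (hd : d + 2 ≤ 2 * n)
    (hT : ∀ t ≤ d, ∀ x, pathArc t x ∈ T) {t t' : ℕ} (ht : t ≤ d) (ht' : t' ≤ d) (x x' : ℤ) :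
    ∃ m ≤ d, AdjChain T m (pathArc t x) (pathArc t' x') := by
  wlog htt : t ≤ t' generalizing t t' x x'
  · obtain ⟨m, hm, h⟩ := this ht' ht x' x (by omega)
    exact ⟨m, hm, h.symm (hT _ ht' _)⟩
  rcases htt.eq_or_lt with rfl | htt
  · by_cases hxx : x = x'
    · exact ⟨0, by omega, congrArg _ hxx⟩
    · exact ⟨1, by omega, adjChain_one (hT _ ht _) (adj_pathArc_of_ne (by omega) hxx)⟩
  rcases Nat.even_or_odd t with heven | hodd
  · by_cases hsucc : t' = t + 1
    · subst hsucc
      by_cases hxx : x' < x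
      · exact ⟨1, by omega, adjChain_one (hT _ ht' _) (adj_pathArc_succ (by omega) hxx)⟩
      -- a detour through a rotation of `pathArc t` lying beyond both `x` and `x'`
      · exact ⟨1 + 1, hd₂,
          (adjChain_one (hT _ ht _) (adj_pathArc_of_ne (x' := x' + 1) (by omega) (by omega))).trans
            (adjChain_one (hT _ ht' _) (adj_pathArc_succ (by omega) (by omega)))⟩
    · exact ⟨t' - t, by omega,
        adjChain_pathArc_of_odd hd hT heven.add_one (by omega) (by omega) ht' x x'⟩
  · exact ⟨t' - t, by omega, adjChain_pathArc_of_odd hd hT hodd le_rfl htt ht' x x'⟩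

lemma exists_adjChain_of_acc_one_mem (hd₂ : 2 ≤ d) (hd : d + 2 ≤ 2 * n)
    (hT : ∀ t ≤ d, ∀ x, pathArc t x ∈ T) {ℓ : Sym2 (MbarPt n)} (hacc : acc 1 ∈ ℓ)
    (hne : ∀ y, ℓ ≠ pathArc 1 y) {t : ℕ} (ht : t ≤ d) (x : ℤ) :
    ∃ m ≤ d, AdjChain T m ℓ (pathArc t x) := by
  have hstep : ∀ y, AdjChain T 1 ℓ (pathArc 1 y) := fun y =>
    adjChain_one (hT 1 (by omega) y) (adj_of_acc_mem (hne y) hacc (Sym2.mem_mk_right _ _))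
  rcases t with _ | _ | t
  · exact ⟨1 + 1, hd₂, (hstep (x - 1)).trans
      (adjChain_one (hT 0 ht x) (adj_pathArc_succ (by omega) (by omega)).symm)⟩
  · exact ⟨1, by omega, hstep x⟩
  · exact ⟨1 + (t + 2 - 1), by omega,
      (hstep 0).trans (adjChain_pathArc_of_odd hd hT odd_one le_rfl (by omega) ht 0 x)⟩

end PathChains

section PathGenerator

variable {d : ℕ}

def pathGen (n d : ℕ) [NeZero n] : Finset (Sym2 (MbarPt n)) :=
  (Finset.range (d + 1)).image (pathArc · 0) ∪
    (Finset.Ioo (d / 2) n).image (fun i => s(pt 0 i, acc 1)) ∪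
    (Finset.Ioo ((d + 1) / 2) n).image (fun j => s(acc 1, acc j))

def IsLeaf (d : ℕ) (q : Sym2 (MbarPt n)) : Prop :=
  (∃ i ∈ Ioo (d / 2) n, ∃ x, q = s(pt x i, acc 1)) ∨ ∃ j ∈ Ioo ((d + 1) / 2) n, q = s(acc 1, acc j)

lemma mem_rClos_pathGen {q : Sym2 (MbarPt n)} :
    q ∈ RClos (pathGen n d : Set (Sym2 (MbarPt n))) ↔
      (∃ t ≤ d, ∃ x, q = pathArc t x) ∨ IsLeaf d q := by
  simp only [pathGen, Finset.coe_union, Finset.coe_image, Finset.coe_range, Finset.coe_Ioo,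
    rClos_union, mem_union, IsLeaf,
    mem_rClos_image pathArc (fun _ _ _ => rotArc_pathArc ..) (fun _ => rfl),
    mem_rClos_image (fun i x => s(pt x i, acc 1)) (fun _ _ _ => rotArc_pt_acc ..) (fun _ => rfl),
    mem_rClos_image (fun j _ => s(acc 1, acc j)) (fun _ _ _ => rotArc_acc_acc ..) (fun _ => rfl),
    mem_Iio, Nat.lt_succ_iff, exists_const, or_assoc]

lemma pathArc_mem_rClos_pathGen {t : ℕ} (ht : t ≤ d) (x : ℤ) :
    pathArc t x ∈ RClos (pathGen n d : Set (Sym2 (MbarPt n))) :=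
  mem_rClos_pathGen.mpr (Or.inl ⟨t, ht, x, rfl⟩)

namespace IsLeaf

variable {q : Sym2 (MbarPt n)}

lemma mem_rClos (h : IsLeaf d q) : q ∈ RClos (pathGen n d : Set (Sym2 (MbarPt n))) :=
  mem_rClos_pathGen.mpr (Or.inr h)

lemma acc_one_mem (h : IsLeaf d q) : acc 1 ∈ q := by
  rcases h with ⟨i, -, x, rfl⟩ | ⟨j, -, rfl⟩
  · exact Sym2.mem_mk_right _ _
  · exact Sym2.mem_mk_left _ _

lemma ne_pathArc (h : IsLeaf d q) (hd : d + 2 ≤ 2 * n) {t : ℕ} (ht : t ≤ d) (x : ℤ) :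
    q ≠ pathArc t x := by
  rcases h with ⟨i, ⟨hi, hin⟩, y, rfl⟩ | ⟨j, -, rfl⟩
  · intro h
    have := (eq_of_pt_acc_eq hin (by omega) h).2
    omega
  · exact fun h => pt_acc_ne_acc_acc _ _ _ _ _ h.symm

lemma arcLevel_eq (h : IsLeaf d q) (hd₂ : 2 ≤ d) : arcLevel q = 2 := by
  rcases h with ⟨i, ⟨hi, hin⟩, x, rfl⟩ | ⟨j, -, rfl⟩
  · exact arcLevel_pt_acc_one x (by omega) hin
  · exact arcLevel_acc_acc _ _

/-- The path lies in the segments and accumulation points up to `⌈d/2⌉` and meets the leaves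
only at their hub `a_2`, so only `pathArc 1` and `pathArc 2` are adjacent to a leaf. -/
lemma adj_pathArc (h : IsLeaf d q) (hd : d + 2 ≤ 2 * n) {t : ℕ} (ht : t ≤ d) {x : ℤ}
    (hadj : Adj (pathArc t x) q) : t = 1 ∨ t = 2 := by
  rcases hadj with hc | ⟨-, a, hp, hq⟩
  · refine absurd hc (not_crosses_pathArc (by omega) x ?_)
    rcases h with ⟨i, ⟨hi, hin⟩, y, rfl⟩ | ⟨j, -, rfl⟩
    · exact forall_mem_pt_acc_notMem_Ioo y 1 hin (by omega)
    · exact forall_mem_acc_acc_notMem_Ioo 1 j _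
  · rw [pathArc, inr_mem_pt_acc] at hp
    subst hp
    rcases h with ⟨i, ⟨hi, hin⟩, y, rfl⟩ | ⟨j, ⟨hj, hjn⟩, rfl⟩
    · have := (ofNat_inj (by omega) (by omega)).mp (inr_mem_pt_acc.mp hq)
      omega
    · rcases inr_mem_acc_acc.mp hq with hq | hq <;>
        have := (ofNat_inj (by omega) (by omega)).mp hq <;> omega

end IsLeaf

lemma arcLevel_le_of_adj (hd₂ : 2 ≤ d) (hd : d + 2 ≤ 2 * n) :
    ∀ p ∈ RClos (pathGen n d : Set (Sym2 (MbarPt n))),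
      ∀ q ∈ RClos (pathGen n d : Set (Sym2 (MbarPt n))), Adj p q → arcLevel q ≤ arcLevel p + 1 := by
  intro p hp q hq h
  rw [mem_rClos_pathGen] at hp hq
  rcases hp with ⟨t, ht, x, rfl⟩ | hp <;> rcases hq with ⟨t', ht', x', rfl⟩ | hq
  · rw [arcLevel_pathArc (by omega), arcLevel_pathArc (by omega)]
    by_contra! hlt
    exact not_adj_pathArc (by omega) (by omega) x x' h
  · rw [arcLevel_pathArc (by omega), hq.arcLevel_eq hd₂]
    have := hq.adj_pathArc hd ht h
    omega
  · rw [arcLevel_pathArc (by omega), hp.arcLevel_eq hd₂]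
    have := hp.adj_pathArc hd ht' h.symm
    omega
  · rw [hp.arcLevel_eq hd₂, hq.arcLevel_eq hd₂]
    omega

lemma hLenLE_pathGen (hd₂ : 2 ≤ d) (hd : d + 2 ≤ 2 * n) :
    HLenLE (pathGen n d : Set (Sym2 (MbarPt n))) d := by
  have hT := fun t (ht : t ≤ d) x => pathArc_mem_rClos_pathGen (n := n) ht x
  intro p hp q hq
  rcases mem_rClos_pathGen.mp hp with ⟨t, ht, x, rfl⟩ | hpl <;>
    rcases mem_rClos_pathGen.mp hq with ⟨t', ht', x', rfl⟩ | hql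
  · exact exists_adjChain_pathArc hd₂ hd hT ht ht' x x'
  · obtain ⟨m, hm, h⟩ := exists_adjChain_of_acc_one_mem hd₂ hd hT hql.acc_one_mem
      (hql.ne_pathArc hd (by omega)) ht x
    exact ⟨m, hm, h.symm hq⟩
  · exact exists_adjChain_of_acc_one_mem hd₂ hd hT hpl.acc_one_mem
      (hpl.ne_pathArc hd (by omega)) ht' x'
  · by_cases hpq : p = q
    · exact ⟨0, by omega, hpq⟩
    · exact ⟨1, by omega, adjChain_one hq (adj_of_acc_mem hpq hpl.acc_one_mem hql.acc_one_mem)⟩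

lemma hLenEq_pathGen (hd₂ : 2 ≤ d) (hd : d + 2 ≤ 2 * n) :
    HLenEq (pathGen n d : Set (Sym2 (MbarPt n))) d :=
  hLenEq_of_apply_le (hLenLE_pathGen hd₂ hd) arcLevel (arcLevel_le_of_adj hd₂ hd)
    (pathArc_mem_rClos_pathGen (Nat.zero_le d) 0) (pathArc_mem_rClos_pathGen le_rfl 0)
    (by rw [arcLevel_pathArc (by omega), arcLevel_pathArc (by omega), Nat.zero_add])

lemma isArc_of_mem_pathGen {p : Sym2 (MbarPt n)} (hp : p ∈ pathGen n d) (hd₁ : 1 ≤ d) :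
    IsArc p := by
  simp only [pathGen, Finset.mem_union, Finset.mem_image, Finset.mem_Ioo] at hp
  rcases hp with (⟨t, -, rfl⟩ | ⟨i, -, rfl⟩) | ⟨j, hj, rfl⟩
  · exact isArc_pt_acc _ _ _
  · exact isArc_pt_acc _ _ _
  · exact isArc_acc_acc (by omega) hj.2 (by omega)

lemma completeOrbit_pathGen :
    CompleteOrbit (pathGen n d : Set (Sym2 (MbarPt n))) := by
  rintro (⟨x, i⟩ | j)
  · by_cases hi : 2 * i ≤ d
    · refine ⟨pathArc (2 * i) x, pathArc_mem_rClos_pathGen hi x, ?_⟩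
      rw [pathArc, show 2 * (i : ℕ) / 2 = i by omega, pt_val]
      exact Sym2.mem_mk_left _ _
    · refine ⟨s(pt x i, acc 1), IsLeaf.mem_rClos (Or.inl ⟨i, ⟨by omega, i.2⟩, x, rfl⟩), ?_⟩
      rw [pt_val]
      exact Sym2.mem_mk_left _ _
  -- `2 * j - 1` truncates to `0` at `j = 0`, and `pathArc 0` ends at `a_1`
  · by_cases hj : 2 * j - 1 ≤ d
    · refine ⟨pathArc (2 * j - 1) 0, pathArc_mem_rClos_pathGen hj 0, ?_⟩
      rw [pathArc, show (2 * (j : ℕ) - 1 + 1) / 2 = j by omega, acc_val]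
      exact Sym2.mem_mk_right _ _
    · refine ⟨s(acc 1, acc j), IsLeaf.mem_rClos (Or.inr ⟨j, ⟨by omega, j.2⟩, rfl⟩), ?_⟩
      rw [acc_val]
      exact Sym2.mem_mk_right _ _

end PathGenerator

section StarGenerator

def starGen (n : ℕ) [NeZero n] : Finset (Sym2 (MbarPt n)) :=
  (Finset.range n).image (fun i => s(pt 0 i, acc 0)) ∪
    (Finset.Ioo 0 n).image (fun j => s(acc 0, acc j))

lemma mem_rClos_starGen {q : Sym2 (MbarPt n)} :
    q ∈ RClos (starGen n : Set (Sym2 (MbarPt n))) ↔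
      (∃ i < n, ∃ x, q = s(pt x i, acc 0)) ∨ ∃ j ∈ Ioo 0 n, q = s(acc 0, acc j) := by
  simp only [starGen, Finset.coe_union, Finset.coe_image, Finset.coe_range, Finset.coe_Ioo,
    rClos_union, mem_union,
    mem_rClos_image (fun i x => s(pt x i, acc 0)) (fun _ _ _ => rotArc_pt_acc ..) (fun _ => rfl),
    mem_rClos_image (fun j _ => s(acc 0, acc j)) (fun _ _ _ => rotArc_acc_acc ..) (fun _ => rfl),
    mem_Iio, exists_const]

lemma hLenLE_starGen : HLenLE (starGen n : Set (Sym2 (MbarPt n))) 1 := by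
  refine hLenLE_one_of_forall_inr_mem (i := Fin.ofNat n 0) fun q hq => ?_
  rcases mem_rClos_starGen.mp hq with ⟨i, -, x, rfl⟩ | ⟨j, -, rfl⟩
  · exact Sym2.mem_mk_right _ _
  · exact Sym2.mem_mk_left _ _

lemma hLenEq_starGen : HLenEq (starGen n : Set (Sym2 (MbarPt n))) 1 := by
  refine ⟨hLenLE_starGen,
    s(pt 0 0, acc 0), mem_rClos_starGen.mpr (Or.inl ⟨0, NeZero.pos n, 0, rfl⟩),
    s(pt 1 0, acc 0), mem_rClos_starGen.mpr (Or.inl ⟨0, NeZero.pos n, 1, rfl⟩), ?_⟩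
  intro m hm h
  obtain rfl : m = 0 := by omega
  exact absurd (eq_of_pt_acc_eq (NeZero.pos n) (NeZero.pos n) h).1 zero_ne_one

lemma isArc_of_mem_starGen {p : Sym2 (MbarPt n)} (hp : p ∈ starGen n) : IsArc p := by
  simp only [starGen, Finset.mem_union, Finset.mem_image, Finset.mem_range, Finset.mem_Ioo] at hp
  rcases hp with ⟨i, -, rfl⟩ | ⟨j, hj, rfl⟩
  · exact isArc_pt_acc _ _ _
  · exact isArc_acc_acc (NeZero.pos n) hj.2 (by omega)

lemma completeOrbit_starGen : CompleteOrbit (starGen n : Set (Sym2 (MbarPt n))) := by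
  rintro (⟨x, i⟩ | j)
  · refine ⟨s(pt x i, acc 0), mem_rClos_starGen.mpr (Or.inl ⟨i, i.2, x, rfl⟩), ?_⟩
    rw [pt_val]
    exact Sym2.mem_mk_left _ _
  · rcases Nat.eq_zero_or_pos j with hj | hj
    · refine ⟨s(pt 0 0, acc 0), mem_rClos_starGen.mpr (Or.inl ⟨0, NeZero.pos n, 0, rfl⟩), ?_⟩
      rw [show j = Fin.ofNat n 0 from Fin.ext (by simp [hj]), ← acc]
      exact Sym2.mem_mk_right _ _
    · refine ⟨s(acc 0, acc j), mem_rClos_starGen.mpr (Or.inr ⟨j, ⟨hj, j.2⟩, rfl⟩), ?_⟩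
      rw [acc_val]
      exact Sym2.mem_mk_right _ _

end StarGenerator

end MbarPt

/-- Proposition 5.14 of the paper: for every `n ≥ 1` and every integer
`d` with `1 ≤ d ≤ 2n - 2`, there exists a finite set `S` of arcs of `M̄ₙ` which is
connected, has complete orbit, and has homological length exactly `d`. Equivalently,
the Paquette–Yıldırım category `C̄ₙ` possesses a classical generator of homological
length `d`. -/
theorem exists_generator_of_homological_length (n : ℕ) (hn : 1 ≤ n)
    (d : ℕ) (hd1 : 1 ≤ d) (hd2 : d ≤ 2 * n - 2) :
    ∃ S : Finset (Sym2 (MbarPt n)),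
      (∀ p ∈ S, IsArc p) ∧
      ConnectedArcs (↑S : Set (Sym2 (MbarPt n))) ∧
      CompleteOrbit (↑S : Set (Sym2 (MbarPt n))) ∧
      HLenEq (↑S : Set (Sym2 (MbarPt n))) d := by
  have : NeZero n := ⟨by omega⟩
  rcases hd1.eq_or_lt with rfl | hd
  · exact ⟨MbarPt.starGen n, fun p => MbarPt.isArc_of_mem_starGen,
      MbarPt.hLenLE_starGen.connectedArcs, MbarPt.completeOrbit_starGen, MbarPt.hLenEq_starGen⟩
  · have hdn : d + 2 ≤ 2 * n := by omega
    exact ⟨MbarPt.pathGen n d, fun p hp => MbarPt.isArc_of_mem_pathGen hp hd1,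
      (MbarPt.hLenLE_pathGen hd hdn).connectedArcs, MbarPt.completeOrbit_pathGen,
      MbarPt.hLenEq_pathGen hd hdn⟩
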